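/- Let n ≥ 2 and let w_0, ..., w_{n-1} be real arc weights on the directed cycle on n vertices with total weight w = Σ_i w_i nonzero. Let W be the weighted distance matrix. Then det(W) = (-1)^{n-1} w^{n-2} w^{(2)}, where w^{(2)} = Σ_{0 ≤ i < j ≤ n-1} w_i w_j. -/

import Mathlib

/-!
With the prefix sums `s j = w 0 + ⋯ + w (j - 1)` and the total weight `S`, the entries are
`W i j = s j - s i + [j < i] S`. Hence consecutive row differences are `S • eᵢ - wᵢ • 𝟙`, and
after subtracting the last column from the others, rows `1, …, n - 1` restricted to columns
`0, …, n - 2` form the scalar matrix `S • 1`. Since `S ≠ 0`, the last column can then be cleared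
below the first row, and expanding along it leaves `(-1)^(n-1) S^(n-2) ∑ j, s j * w j`.
-/

open Finset Matrix

theorem Matrix.det_of_submatrix_succ_castSucc_scalar {K : Type*} [Field K] {k : ℕ}
    (A : Matrix (Fin (k + 1)) (Fin (k + 1)) K) {d : K} (hd : d ≠ 0)
    (hA : ∀ i j : Fin k, A i.succ j.castSucc = if i = j then d else 0) :
    A.det = (-1) ^ k * d ^ k *
      (A 0 (Fin.last k) - ∑ j : Fin k, A 0 j.castSucc * A j.succ (Fin.last k) / d) := by
  set c : Fin (k + 1) → K := Fin.lastCases 1 fun j => -A j.succ (Fin.last k) / d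
  set B := A.updateCol (Fin.last k) fun i => ∑ j, c j • A i j
  have hB : B.det = A.det := by
    rw [det_updateCol_sum]
    simp [c]
  have hB_last (i : Fin (k + 1)) : B i (Fin.last k) =
      A i (Fin.last k) - ∑ j : Fin k, A i j.castSucc * A j.succ (Fin.last k) / d := by
    simp [B, c, Fin.sum_univ_castSucc, sub_eq_neg_add, neg_div, mul_div_assoc, mul_comm]
  have hB_succ (i : Fin k) : B i.succ (Fin.last k) = 0 := by
    rw [hB_last, sum_eq_single i]
    · rw [hA, if_pos rfl, mul_div_cancel_left₀ _ hd, sub_self]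
    · intro j _ hji
      rw [hA, if_neg (Ne.symm hji), zero_mul, zero_div]
    · simp
  have hB_minor : B.submatrix Fin.succ Fin.castSucc = d • 1 := by
    ext i j
    simp [B, hA, Matrix.one_apply]
  rw [← hB, det_succ_column B (Fin.last k), Fin.sum_univ_succ, Fin.succAbove_zero,
    Fin.succAbove_last, hB_minor, det_smul, det_one, Fintype.card_fin, hB_last]
  simp only [hB_succ, mul_zero, zero_mul, sum_const_zero, add_zero, Fin.val_zero,
    Fin.val_last, zero_add, mul_one]
  ring

section PrefixSum

open Fin.NatCast

variable {n : ℕ} [NeZero n]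

section AddCommMonoid

variable {M : Type*} [AddCommMonoid M] (w : Fin n → M)

/-- `w 0 + ⋯ + w (t - 1)`, with indices read modulo `n`. -/
def prefixSum (t : ℕ) : M := ∑ k ∈ range t, w k

lemma prefixSum_zero : prefixSum w 0 = 0 := sum_range_zero _

lemma prefixSum_val_add_one (i : Fin n) : prefixSum w (i + 1) = prefixSum w i + w i := by
  rw [prefixSum, sum_range_succ, Fin.cast_val_eq_self, prefixSum]

lemma prefixSum_add (s t : ℕ) :
    prefixSum w (s + t) = prefixSum w s + ∑ k ∈ range t, w ((s : Fin n) + (k : Fin n)) := by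
  simp only [prefixSum, sum_range_add, Nat.cast_add]

lemma prefixSum_self_add (t : ℕ) : prefixSum w (n + t) = ∑ i, w i + prefixSum w t := by
  rw [prefixSum_add, Fin.natCast_self, prefixSum, ← Fin.sum_univ_eq_sum_range (fun k => w k)]
  simp only [Fin.cast_val_eq_self, zero_add, prefixSum]

lemma prefixSum_val_eq_sum_Iio (j : Fin n) : prefixSum w j = ∑ i ∈ Iio j, w i := by
  rw [prefixSum, ← Nat.Iio_eq_range, ← Fin.map_valEmbedding_Iio, sum_map]
  simp only [Fin.valEmbedding_apply, Fin.cast_val_eq_self]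

end AddCommMonoid

lemma sum_mul_prefixSum {R : Type*} [NonUnitalNonAssocSemiring R] (w : Fin n → R) :
    ∑ j : Fin n, prefixSum w j * w j = ∑ i, ∑ j ∈ Ioi i, w i * w j := by
  simp_rw [prefixSum_val_eq_sum_Iio, sum_mul]
  exact sum_comm' (by simp [and_comm])

variable {M : Type*} [AddCommGroup M] (w : Fin n → M)

/-- The distance matrix of the directed cycle `0 → 1 → ⋯ → n - 1 → 0` with arc weights `w`:
the path from `i` to `j` wraps around exactly when `j < i`. -/
def cycleDistMatrix : Matrix (Fin n) (Fin n) M :=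
  of fun i j => prefixSum w j - prefixSum w i + if j < i then ∑ k, w k else 0

lemma sum_range_sub_eq_cycleDistMatrix (i j : Fin n) :
    ∑ k ∈ range ((j - i : Fin n) : ℕ), w (i + (k : Fin n)) = cycleDistMatrix w i j := by
  have h_split := prefixSum_add w i ((j - i : Fin n) : ℕ)
  rw [Fin.cast_val_eq_self] at h_split
  rw [cycleDistMatrix, of_apply, ← add_right_inj (prefixSum w i), ← h_split]
  split_ifs with hji
  · rw [Fin.coe_sub_iff_lt.mpr hji, show (i : ℕ) + (n + j - i) = n + j by omega,
      prefixSum_self_add]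
    abel
  · rw [Fin.coe_sub_iff_le.mpr (not_lt.mp hji), show (i : ℕ) + (j - i) = j by omega]
    abel

end PrefixSum

theorem det_cycleDistMatrix_eq_det_bordered {R : Type*} [CommRing R] {m : ℕ}
    (w : Fin (m + 2) → R) :
    (cycleDistMatrix w).det = (of (vecCons
      (fun j => if j = Fin.last _ then prefixSum w (m + 1) else prefixSum w j - prefixSum w (m + 1))
      fun i j => if j = Fin.last _ then -w i.castSucc
        else if j = i.castSucc then ∑ k, w k else 0)).det := by
  set S := ∑ k, w k
  set B : Matrix (Fin (m + 2)) (Fin (m + 2)) R :=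
    of (vecCons (fun j => prefixSum w j)
      fun i j => (if j = i.castSucc then S else 0) - w i.castSucc)
  have hB : (cycleDistMatrix w).det = B.det :=
    det_eq_of_forall_row_eq_smul_add_pred (fun _ => 1)
      (fun j => by simp [cycleDistMatrix, B, prefixSum_zero])
      (fun i j => by
        simp only [cycleDistMatrix, B, of_apply, cons_val_succ, one_mul, Fin.val_succ]
        rw [← Fin.val_castSucc i, prefixSum_val_add_one]
        simp only [Fin.lt_def, Fin.ext_iff, Fin.val_succ, Fin.val_castSucc]
        split_ifs <;> first | ring1 | (exfalso; omega))
  -- subtract the last column from all the others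
  rw [hB, ← det_transpose B]
  conv_rhs => rw [← det_transpose]
  refine det_eq_of_forall_row_eq_smul_add_const (fun j => if j = Fin.last _ then 0 else 1)
    (Fin.last _) (if_pos rfl) fun j i => ?_
  refine Fin.cases ?_ (fun i => ?_) i
  · by_cases hj : j = Fin.last _ <;> simp [B, hj]
  · by_cases hj : j = Fin.last _ <;>
      simp [B, hj, (Fin.castSucc_lt_last i).ne', sub_eq_add_neg]

theorem det_cycleDistMatrix {K : Type*} [Field K] {m : ℕ} (w : Fin (m + 2) → K)
    (hw : ∑ k, w k ≠ 0) :
    (cycleDistMatrix w).det =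
      (-1) ^ (m + 1) * (∑ k, w k) ^ m * ∑ j : Fin (m + 2), prefixSum w j * w j := by
  rw [det_cycleDistMatrix_eq_det_bordered, det_of_submatrix_succ_castSucc_scalar _ hw
    (fun i j => by simp [(Fin.castSucc_lt_last j).ne, eq_comm])]
  set S := ∑ k, w k
  have hP_last : prefixSum w (m + 1) = ∑ j : Fin (m + 1), w j.castSucc := by
    simp [prefixSum, ← Fin.sum_univ_eq_sum_range]
  have hS : S = prefixSum w (m + 1) + w (Fin.last _) := by
    rw [hP_last]
    exact Fin.sum_univ_castSucc w
  have h_border : ∑ j : Fin (m + 1), (prefixSum w j - prefixSum w (m + 1)) * w j.castSucc =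
      ∑ j : Fin (m + 1), prefixSum w j * w j.castSucc -
        prefixSum w (m + 1) * prefixSum w (m + 1) := by
    simp only [sub_mul, sum_sub_distrib, ← mul_sum, ← hP_last]
  simp only [of_apply, cons_val_zero, cons_val_succ, if_true, Fin.val_castSucc,
    (Fin.castSucc_lt_last _).ne, if_false, mul_neg]
  rw [← sum_div, sum_neg_distrib, h_border,
    Fin.sum_univ_castSucc (fun j : Fin (m + 2) => prefixSum w j * w j)]
  simp only [Fin.val_castSucc, Fin.val_last]
  field_simp
  rw [hS]
  ring

open Fin.NatCast in
theorem stmt_11 {n : ℕ} [NeZero n] (hn : 2 ≤ n) (w : Fin n → ℝ)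
    (hw : (∑ i, w i) ≠ 0)
    (W : Matrix (Fin n) (Fin n) ℝ)
    (hW : W = Matrix.of fun i j => ∑ k ∈ Finset.range ((j - i : Fin n) : ℕ), w (i + (k : Fin n))) :
    W.det = (-1 : ℝ) ^ (n - 1) * (∑ i, w i) ^ (n - 2) *
      (∑ i, ∑ j ∈ Finset.Ioi i, w i * w j) := by
  obtain ⟨m, rfl⟩ : ∃ m, n = m + 2 := ⟨n - 2, by omega⟩
  have hW' : W = cycleDistMatrix w := by
    rw [hW]
    ext i j
    exact sum_range_sub_eq_cycleDistMatrix w i j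
  rw [hW', det_cycleDistMatrix w hw, sum_mul_prefixSum]
  rfl
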